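/- arXiv:0911.1719 — 7 statements merged into one kernel-verified Lean document; each statement's English description precedes it below -/
import Mathlib

section
/- There is no generalized tadpole in the colored group field model in any dimension D. Precisely: there exists no colored graph of dimension D whose total number N of external legs satisfies 1 ≤ N ≤ D and all of whose external legs are carried by one single vertex. (In particular, in dimension D = 4, the colored Ooguri group field model contains no generalized tadpole, i.e. no (N < 5)-point subgraph with only one external vertex.) -/
/-!
A colored graph of dimension `D` consists of two finite disjoint sets of vertices `Vp` and `Vm`
(positive and negative vertices) and, for each color `ℓ ∈ {1, …, D+1}` (modelled by
`ℓ : Fin (D+1)`), a partial matching `M ℓ` pairing some vertices of `Vp` with vertices of `Vm`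
(each vertex belongs to at most one edge of each color).  We encode the matching of color `ℓ`
as a function `M ℓ : Vp → Option Vm` which is injective on its defined values.  A vertex not
covered by `M ℓ` carries an external leg of color `ℓ`.
-/

/-- The vertex `x ∈ Vp ⊕ Vm` carries an external leg of color `ℓ`,
i.e. it is not covered by the matching `M ℓ`. -/
def ExtLeg {D : ℕ} {Vp Vm : Type*} (M : Fin (D + 1) → Vp → Option Vm)
    (ℓ : Fin (D + 1)) : Vp ⊕ Vm → Prop
  | Sum.inl v => M ℓ v = none
  | Sum.inr w => ∀ v, M ℓ v ≠ some w

/-- there is no generalized tadpole in the colored group field model in any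
dimension `D ≥ 1`: there is no colored graph of dimension `D` whose total number `N` of
external legs satisfies `1 ≤ N ≤ D` and all of whose external legs are carried by one single
vertex `x₀`. -/
theorem no_generalized_tadpole (D : ℕ) (hD : 1 ≤ D)
    (Vp Vm : Type*) [Fintype Vp] [Fintype Vm]
    (M : Fin (D + 1) → Vp → Option Vm)
    (hinj : ∀ ℓ v v' w, M ℓ v = some w → M ℓ v' = some w → v = v')
    (x₀ : Vp ⊕ Vm)
    (hallx₀ : ∀ ℓ x, ExtLeg M ℓ x → x = x₀)
    (hN₁ : 1 ≤ ∑ ℓ : Fin (D + 1), Nat.card {x : Vp ⊕ Vm // ExtLeg M ℓ x})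
    (hND : ∑ ℓ : Fin (D + 1), Nat.card {x : Vp ⊕ Vm // ExtLeg M ℓ x} ≤ D) :
    False := by
  classical
  -- There is a color with no external leg (since N ≤ D < D+1).
  obtain ⟨ℓ₀, hℓ₀⟩ : ∃ ℓ, Nat.card {x : Vp ⊕ Vm // ExtLeg M ℓ x} = 0 := by
    by_contra h
    push_neg at h
    have : ∀ ℓ ∈ Finset.univ (α := Fin (D+1)), 1 ≤ Nat.card {x : Vp ⊕ Vm // ExtLeg M ℓ x} :=
      fun ℓ _ => Nat.one_le_iff_ne_zero.mpr (h ℓ)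
    have h2 := Finset.card_nsmul_le_sum (Finset.univ : Finset (Fin (D+1)))
      (fun ℓ => Nat.card {x : Vp ⊕ Vm // ExtLeg M ℓ x}) 1 this
    rw [Finset.card_univ, Fintype.card_fin, smul_eq_mul] at h2
    omega
  have hnoleg₀ : ∀ x, ¬ ExtLeg M ℓ₀ x := by
    intro x hx
    have : Nonempty {x : Vp ⊕ Vm // ExtLeg M ℓ₀ x} := ⟨⟨x, hx⟩⟩
    have := Nat.card_pos (α := {x : Vp ⊕ Vm // ExtLeg M ℓ₀ x})
    omega
  -- Color ℓ₀ is a perfect matching, so card Vp = card Vm.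
  have hcovp₀ : ∀ v : Vp, M ℓ₀ v ≠ none := fun v h => hnoleg₀ (Sum.inl v) h
  have hcovm₀ : ∀ w : Vm, ∃ v, M ℓ₀ v = some w := by
    intro w
    by_contra h
    push_neg at h
    exact hnoleg₀ (Sum.inr w) h
  have hex₀ : ∀ v : Vp, ∃ w, M ℓ₀ v = some w := by
    intro v
    cases h : M ℓ₀ v with
    | none => exact absurd h (hcovp₀ v)
    | some w => exact ⟨w, rfl⟩
  let g : Vp → Vm := fun v => (hex₀ v).choose
  have hg : ∀ v, M ℓ₀ v = some (g v) := fun v => (hex₀ v).choose_spec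
  have hgbij : Function.Bijective g := by
    constructor
    · intro v v' h
      exact hinj ℓ₀ v v' (g v) (hg v) (by rw [hg v', h])
    · intro w
      obtain ⟨v, hv⟩ := hcovm₀ w
      refine ⟨v, ?_⟩
      have := (hg v).symm.trans hv
      exact Option.some_injective _ this
  have hcardeq : Fintype.card Vp = Fintype.card Vm := Fintype.card_of_bijective hgbij
  -- There is a color with an external leg.
  obtain ⟨ℓ₁, hℓ₁⟩ : ∃ ℓ, Nat.card {x : Vp ⊕ Vm // ExtLeg M ℓ x} ≠ 0 := by
    by_contra h
    push_neg at h
    have : ∑ ℓ : Fin (D + 1), Nat.card {x : Vp ⊕ Vm // ExtLeg M ℓ x} = 0 :=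
      Finset.sum_eq_zero fun ℓ _ => h ℓ
    omega
  obtain ⟨⟨x, hx⟩⟩ : Nonempty {x : Vp ⊕ Vm // ExtLeg M ℓ₁ x} :=
    (Nat.card_ne_zero.mp hℓ₁).1
  have hx0 : ExtLeg M ℓ₁ x₀ := (hallx₀ ℓ₁ x hx) ▸ hx
  cases x₀ with
  | inl v₀ =>
    -- every w ∈ Vm is covered by color ℓ₁
    have hcov : ∀ w : Vm, ∃ v, M ℓ₁ v = some w := by
      intro w
      by_contra h
      push_neg at h
      exact absurd (hallx₀ ℓ₁ (Sum.inr w) h) (by simp)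
    have hv₀ : M ℓ₁ v₀ = none := hx0
    let f : Vm → Vp := fun w => (hcov w).choose
    have hf : ∀ w, M ℓ₁ (f w) = some w := fun w => (hcov w).choose_spec
    have hfinj : Function.Injective f := by
      intro w w' h
      have := (hf w).symm.trans (by rw [h, hf w'])
      exact Option.some_injective _ this
    have hnot : v₀ ∉ Set.range f := by
      rintro ⟨w, rfl⟩
      rw [hf w] at hv₀
      exact Option.some_ne_none w hv₀
    have := Fintype.card_lt_of_injective_of_notMem f hfinj hnot
    omega
  | inr w₀ =>
    have hcov : ∀ v : Vp, M ℓ₁ v ≠ none := by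
      intro v h
      exact absurd (hallx₀ ℓ₁ (Sum.inl v) h) (by simp)
    have hex : ∀ v : Vp, ∃ w, M ℓ₁ v = some w := by
      intro v
      cases h : M ℓ₁ v with
      | none => exact absurd h (hcov v)
      | some w => exact ⟨w, rfl⟩
    let f : Vp → Vm := fun v => (hex v).choose
    have hf : ∀ v, M ℓ₁ v = some (f v) := fun v => (hex v).choose_spec
    have hfinj : Function.Injective f := by
      intro v v' h
      exact hinj ℓ₁ v v' (f v) (hf v) (by rw [hf v', h])
    have hnot : w₀ ∉ Set.range f := by
      rintro ⟨v, rfl⟩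
      exact hx0 v (hf v)
    have := Fintype.card_lt_of_injective_of_notMem f hfinj hnot
    omega
end

section
/- Let G be a colored graph of dimension D whose total number N of external legs satisfies N < D + 1. Then some color is missing on the external legs, and consequently: the number n of vertices of G is even, N is even, and for each color m the number of external legs of color m is even. In particular, the colored theory in dimension D has no odd point functions with fewer than D + 1 arguments. -/
lemma key {D : ℕ} {Vp Vm : Type*} [Fintype Vp] [Fintype Vm]
    (M : Fin (D + 1) → Vp → Option Vm)
    (hinj : ∀ ℓ v v' w, M ℓ v = some w → M ℓ v' = some w → v = v')
    (ℓ : Fin (D + 1)) :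
    ∃ a, Nat.card {x : Vp ⊕ Vm // ExtLeg M ℓ x} + 2 * a
      = Fintype.card Vp + Fintype.card Vm := by
  classical
  refine ⟨Fintype.card {v : Vp // (M ℓ v).isSome}, ?_⟩
  have hsplit : Nat.card {x : Vp ⊕ Vm // ExtLeg M ℓ x}
      = Fintype.card {v : Vp // M ℓ v = none}
        + Fintype.card {w : Vm // ∀ v, M ℓ v ≠ some w} := by
    rw [Nat.card_eq_fintype_card]
    rw [Fintype.card_congr (Equiv.subtypeSum (p := ExtLeg M ℓ))]
    simp only [Fintype.card_sum]
    congr 1 <;> exact Fintype.card_congr (Equiv.subtypeEquivRight (fun _ => Iff.rfl))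
  have hbij : Fintype.card {v : Vp // (M ℓ v).isSome}
      = Fintype.card {w : Vm // ∃ v, M ℓ v = some w} := by
    apply Fintype.card_congr
    refine Equiv.ofBijective
      (fun v => ⟨(M ℓ v.1).get v.2, v.1, (Option.some_get v.2).symm⟩) ⟨?_, ?_⟩
    · rintro ⟨v, hv⟩ ⟨v', hv'⟩ h
      simp only [Subtype.mk.injEq] at h ⊢
      have hv1 : M ℓ v = some ((M ℓ v').get hv') := by
        rw [← h]; exact (Option.some_get hv).symm
      exact hinj ℓ v v' _ hv1 (Option.some_get hv').symm
    · rintro ⟨w, v, hv⟩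
      refine ⟨⟨v, by simp [hv]⟩, ?_⟩
      simp [hv]
  have h1 : Fintype.card Vp = Fintype.card {v : Vp // M ℓ v = none}
      + Fintype.card {v : Vp // (M ℓ v).isSome} := by
    rw [← Fintype.card_congr (Equiv.sumCompl (fun v : Vp => M ℓ v = none)),
      Fintype.card_sum]
    congr 1
    exact Fintype.card_congr
      (Equiv.subtypeEquivRight (fun v => by simp [Option.isSome_iff_ne_none]))
  have h2 : Fintype.card Vm = Fintype.card {w : Vm // ∃ v, M ℓ v = some w}
      + Fintype.card {w : Vm // ∀ v, M ℓ v ≠ some w} := by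
    rw [← Fintype.card_congr (Equiv.sumCompl (fun w : Vm => ∃ v, M ℓ v = some w)),
      Fintype.card_sum]
    congr 1
    exact Fintype.card_congr (Equiv.subtypeEquivRight (fun w => by push_neg; rfl))
  omega

/-- if the total number `N` of external legs of a colored graph of dimension `D`
satisfies `N < D + 1`, then some color is missing on the external legs, and consequently the
number `n = |V₊| + |V₋|` of vertices is even, `N` is even, and for each color `m` the number of
external legs of color `m` is even.  (In particular the colored theory in dimension `D` has no
odd point functions with fewer than `D + 1` arguments.) -/
theorem missing_color_and_even_of_few_external_legs (D : ℕ) (hD : 1 ≤ D)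
    (Vp Vm : Type*) [Fintype Vp] [Fintype Vm]
    (M : Fin (D + 1) → Vp → Option Vm)
    (hinj : ∀ ℓ v v' w, M ℓ v = some w → M ℓ v' = some w → v = v')
    (hN : ∑ ℓ : Fin (D + 1), Nat.card {x : Vp ⊕ Vm // ExtLeg M ℓ x} < D + 1) :
    (∃ ℓ : Fin (D + 1), ∀ x : Vp ⊕ Vm, ¬ ExtLeg M ℓ x) ∧
      Even (Fintype.card Vp + Fintype.card Vm) ∧
      Even (∑ ℓ : Fin (D + 1), Nat.card {x : Vp ⊕ Vm // ExtLeg M ℓ x}) ∧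
      ∀ m : Fin (D + 1), Even (Nat.card {x : Vp ⊕ Vm // ExtLeg M m x}) := by
  classical
  -- pigeonhole: some color has zero external legs
  have hzero : ∃ ℓ : Fin (D + 1), Nat.card {x : Vp ⊕ Vm // ExtLeg M ℓ x} = 0 := by
    by_contra h
    push_neg at h
    have : D + 1 ≤ ∑ ℓ : Fin (D + 1), Nat.card {x : Vp ⊕ Vm // ExtLeg M ℓ x} := by
      calc D + 1 = ∑ _ℓ : Fin (D + 1), 1 := by simp
        _ ≤ _ := Finset.sum_le_sum (fun ℓ _ => Nat.one_le_iff_ne_zero.mpr (h ℓ))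
    omega
  obtain ⟨ℓ₀, hℓ₀⟩ := hzero
  have hempty : ∀ x : Vp ⊕ Vm, ¬ ExtLeg M ℓ₀ x := by
    intro x hx
    have : Nat.card {x : Vp ⊕ Vm // ExtLeg M ℓ₀ x} ≠ 0 :=
      Nat.card_ne_zero.mpr ⟨⟨⟨x, hx⟩⟩, inferInstance⟩
    exact this hℓ₀
  obtain ⟨a₀, ha₀⟩ := key M hinj ℓ₀
  rw [hℓ₀, zero_add] at ha₀
  have hn : Even (Fintype.card Vp + Fintype.card Vm) := ⟨a₀, by omega⟩
  have hm : ∀ m : Fin (D + 1), Even (Nat.card {x : Vp ⊕ Vm // ExtLeg M m x}) := by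
    intro m
    obtain ⟨a, ha⟩ := key M hinj m
    exact ⟨a₀ - a, by omega⟩
  exact ⟨⟨ℓ₀, hempty⟩, hn, Finset.even_sum _ (fun m _ => hm m), hm⟩
end

section
/- Let G be a colored graph of dimension D ≥ 2 with exactly two external legs. Then the two external legs carry the same color, and one of them is attached to a vertex of V₊ while the other is attached to a vertex of V₋. -/
section Aux
open Classical in
lemma aux_card_split {α : Type*} [Fintype α] (p : α → Prop) :
    Nat.card α = Nat.card {x // p x} + Nat.card {x // ¬ p x} := by
  rw [← Nat.card_sum]
  exact Nat.card_congr (Equiv.sumCompl p).symm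

lemma aux_matched {D : ℕ} {Vp Vm : Type*} (M : Fin (D+1) → Vp → Option Vm)
    (hinj : ∀ ℓ v v' w, M ℓ v = some w → M ℓ v' = some w → v = v') (ℓ : Fin (D+1)) :
    Nat.card {v : Vp // ¬ M ℓ v = none} = Nat.card {w : Vm // ∃ v, M ℓ v = some w} := by
  apply Nat.card_congr
  refine Equiv.ofBijective
    (fun x => ⟨(M ℓ x.1).get (Option.ne_none_iff_isSome.mp x.2), x.1, (Option.some_get _).symm⟩)
    ⟨?_, ?_⟩
  · rintro ⟨v, hv⟩ ⟨v', hv'⟩ h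
    obtain ⟨w, hw⟩ := Option.ne_none_iff_exists'.mp hv
    obtain ⟨w', hw'⟩ := Option.ne_none_iff_exists'.mp hv'
    have h1 : w = w' := by
      have := congrArg Subtype.val h
      simpa [hw, hw'] using this
    exact Subtype.ext (hinj ℓ v v' w hw (h1 ▸ hw'))
  · rintro ⟨w, v, hv⟩
    exact ⟨⟨v, by simp [hv]⟩, Subtype.ext (by simp [hv])⟩

lemma aux_balance {D : ℕ} {Vp Vm : Type*} [Fintype Vp] [Fintype Vm]
    (M : Fin (D+1) → Vp → Option Vm)
    (hinj : ∀ ℓ v v' w, M ℓ v = some w → M ℓ v' = some w → v = v') (ℓ : Fin (D+1)) :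
    Nat.card {v : Vp // M ℓ v = none} + Nat.card Vm
      = Nat.card {w : Vm // ∀ v, M ℓ v ≠ some w} + Nat.card Vp := by
  have h1 := aux_card_split (fun v : Vp => M ℓ v = none)
  have h2 := aux_card_split (fun w : Vm => ∀ v, M ℓ v ≠ some w)
  have h3 : Nat.card {w : Vm // ¬ ∀ v, M ℓ v ≠ some w}
      = Nat.card {w : Vm // ∃ v, M ℓ v = some w} := by
    apply Nat.card_congr
    apply Equiv.subtypeEquivRight
    intro w; push_neg; rfl
  have h4 := aux_matched M hinj ℓ
  omega
end Aux

/-- if a colored graph of dimension `D ≥ 2` has exactly two external legs, then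
the two external legs carry the same color, and one of them is attached to a vertex of `V₊`
while the other is attached to a vertex of `V₋`. -/
theorem two_point_graph_legs_same_color (D : ℕ) (hD : 2 ≤ D)
    (Vp Vm : Type*) [Fintype Vp] [Fintype Vm]
    (M : Fin (D + 1) → Vp → Option Vm)
    (hinj : ∀ ℓ v v' w, M ℓ v = some w → M ℓ v' = some w → v = v')
    (hN : ∑ ℓ : Fin (D + 1), Nat.card {x : Vp ⊕ Vm // ExtLeg M ℓ x} = 2) :
    ∃ (ℓ : Fin (D + 1)) (v : Vp) (w : Vm),
      ExtLeg M ℓ (Sum.inl v) ∧ ExtLeg M ℓ (Sum.inr w) ∧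
      ∀ m x, ExtLeg M m x → m = ℓ ∧ (x = Sum.inl v ∨ x = Sum.inr w) := by
  classical
  set f : Fin (D+1) → ℕ := fun ℓ => Nat.card {v : Vp // M ℓ v = none} with hf
  set g : Fin (D+1) → ℕ := fun ℓ => Nat.card {w : Vm // ∀ v, M ℓ v ≠ some w} with hg
  have hsplit : ∀ ℓ, Nat.card {x : Vp ⊕ Vm // ExtLeg M ℓ x} = f ℓ + g ℓ := by
    intro ℓ
    rw [← Nat.card_sum]
    exact Nat.card_congr Equiv.subtypeSum
  rw [Finset.sum_congr rfl fun ℓ _ => hsplit ℓ] at hN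
  have hbal : ∀ ℓ, f ℓ + Nat.card Vm = g ℓ + Nat.card Vp := fun ℓ => aux_balance M hinj ℓ
  -- card Vp = card Vm
  have hcard : Nat.card Vp = Nat.card Vm := by
    by_contra hne
    rcases Nat.lt_or_ge (Nat.card Vp) (Nat.card Vm) with h | h
    · have hge : ∀ ℓ : Fin (D+1), 1 ≤ g ℓ := by intro ℓ; have := hbal ℓ; omega
      have : (D+1 : ℕ) ≤ ∑ ℓ : Fin (D+1), (f ℓ + g ℓ) := by
        calc (D+1 : ℕ) = ∑ _ℓ : Fin (D+1), 1 := by simp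
        _ ≤ _ := Finset.sum_le_sum fun ℓ _ => by have := hge ℓ; omega
      omega
    · have hlt : Nat.card Vm < Nat.card Vp := lt_of_le_of_ne h (Ne.symm (by omega))
      have hge : ∀ ℓ : Fin (D+1), 1 ≤ f ℓ := by intro ℓ; have := hbal ℓ; omega
      have : (D+1 : ℕ) ≤ ∑ ℓ : Fin (D+1), (f ℓ + g ℓ) := by
        calc (D+1 : ℕ) = ∑ _ℓ : Fin (D+1), 1 := by simp
        _ ≤ _ := Finset.sum_le_sum fun ℓ _ => by have := hge ℓ; omega
      omega
  have hfg : ∀ ℓ, f ℓ = g ℓ := by intro ℓ; have := hbal ℓ; omega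
  -- there is ℓ0 with f ℓ0 = 1, g ℓ0 = 1, others zero
  have hsum1 : ∑ ℓ : Fin (D+1), f ℓ = 1 := by
    have : ∑ ℓ : Fin (D+1), (f ℓ + g ℓ) = ∑ ℓ : Fin (D+1), 2 * f ℓ := by
      apply Finset.sum_congr rfl; intro ℓ _; rw [← hfg ℓ]; ring
    rw [this, ← Finset.mul_sum] at hN
    omega
  obtain ⟨ℓ0, _, hℓ0⟩ : ∃ ℓ0 ∈ Finset.univ, f ℓ0 ≠ 0 := by
    by_contra h
    push_neg at h
    rw [Finset.sum_eq_zero (fun ℓ hℓ => h ℓ hℓ)] at hsum1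
    omega
  have hrest : ∑ ℓ ∈ Finset.univ.erase ℓ0, f ℓ = 0 ∧ f ℓ0 = 1 := by
    have := Finset.add_sum_erase Finset.univ f (Finset.mem_univ ℓ0)
    omega
  have hfzero : ∀ m, m ≠ ℓ0 → f m = 0 := by
    intro m hm
    have := Finset.sum_eq_zero_iff.mp hrest.1 m (Finset.mem_erase.mpr ⟨hm, Finset.mem_univ m⟩)
    exact this
  have hf1 : f ℓ0 = 1 := hrest.2
  have hg1 : g ℓ0 = 1 := by rw [← hfg]; exact hf1
  -- extract the vertices
  obtain ⟨⟨v, hv⟩, hvuniq⟩ := Nat.card_eq_one_iff_exists.mp hf1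
  obtain ⟨⟨w, hw⟩, hwuniq⟩ := Nat.card_eq_one_iff_exists.mp hg1
  refine ⟨ℓ0, v, w, hv, hw, ?_⟩
  intro m x hx
  have hmℓ0 : m = ℓ0 := by
    by_contra hm
    have hfm := hfzero m hm
    have hgm : g m = 0 := by rw [← hfg]; exact hfm
    have hfm' : Nat.card {v : Vp // M m v = none} = 0 := hfm
    have hgm' : Nat.card {w : Vm // ∀ v, M m v ≠ some w} = 0 := hgm
    cases x with
    | inl v' =>
      have : Nonempty {v : Vp // M m v = none} := ⟨⟨v', hx⟩⟩
      have := Nat.card_pos (α := {v : Vp // M m v = none})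
      omega
    | inr w' =>
      have : Nonempty {w : Vm // ∀ v, M m v ≠ some w} := ⟨⟨w', hx⟩⟩
      have := Nat.card_pos (α := {w : Vm // ∀ v, M m v ≠ some w})
      omega
  subst hmℓ0
  refine ⟨rfl, ?_⟩
  cases x with
  | inl v' =>
    left
    have := hvuniq ⟨v', hx⟩
    exact congrArg Sum.inl (congrArg Subtype.val this)
  | inr w' =>
    right
    have := hwuniq ⟨w', hx⟩
    exact congrArg Sum.inr (congrArg Subtype.val this)
end

section
/- Every connected colored two-point graph admits an exhausting sequence of cuts. Precisely: let G be a colored graph of dimension D with n vertices whose underlying graph is connected, and with exactly two external legs, both of the same color c, one carried by a vertex v_A ∈ V₊ and the other by a vertex v_B ∈ V₋ (so every matching M_ℓ with ℓ ≠ c covers all vertices, and M_c covers all vertices except v_A and v_B). Then there exists an enumeration v₁, v₂, …, v_n of all the vertices of G with v₁ = v_A and v_n = v_B such that for every p with 1 ≤ p ≤ n − 1, both the subgraph induced by A_p = {v₁, …, v_p} (with all lines of G having both endpoints in A_p) and the subgraph induced by B_p = {v_{p+1}, …, v_n} are connected. -/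
/-!
A colored graph of dimension `D` consists of two finite disjoint sets of vertices `Vp` and `Vm`
and, for each color `ℓ : Fin (D+1)`, a partial matching `M ℓ : Vp → Option Vm`, injective on
its defined values.  A vertex not covered by `M ℓ` carries an external leg of color `ℓ`.
The underlying graph has vertex set `Vp ⊕ Vm`, two vertices being adjacent when some matching
`M ℓ` matches them.  An `(A, B)`-cut of a connected two-point graph with external vertices
`v_A, v_B` is a partition of its vertices into sets `A ∋ v_A` and `B ∋ v_B` such that the
subgraphs induced by `A` and by `B` are connected; an exhausting sequence of cuts is a chain
`∅ = A₀ ⊊ A₁ ⊊ ⋯ ⊊ A_n = G` with `|A_p| = p` such that `(A_p, G ∖ A_p)` is a cut for every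
`1 ≤ p ≤ n − 1`.  We encode the exhausting sequence by an enumeration (a duplicate-free list
`L` of all vertices), `A_p` being the set of the first `p` entries of `L`.
-/

/-- `x` and `y` are joined by a line of color `ℓ` of the matching family `M`. -/
def AdjColor {D : ℕ} {Vp Vm : Type*} (M : Fin (D + 1) → Vp → Option Vm)
    (ℓ : Fin (D + 1)) (x y : Vp ⊕ Vm) : Prop :=
  (∃ v w, x = Sum.inl v ∧ y = Sum.inr w ∧ M ℓ v = some w) ∨
    (∃ v w, y = Sum.inl v ∧ x = Sum.inr w ∧ M ℓ v = some w)

/-- The underlying graph of a colored graph: two vertices are adjacent when some matching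
`M ℓ` matches them. -/
def underlyingGraph {D : ℕ} {Vp Vm : Type*} (M : Fin (D + 1) → Vp → Option Vm) :
    SimpleGraph (Vp ⊕ Vm) where
  Adj x y := ∃ ℓ, AdjColor M ℓ x y
  symm := by
    constructor
    rintro x y ⟨ℓ, h | h⟩
    · exact ⟨ℓ, Or.inr h⟩
    · exact ⟨ℓ, Or.inl h⟩
  loopless := by
    constructor
    rintro x ⟨ℓ, ⟨v, w, hx, hy, -⟩ | ⟨v, w, hx, hy, -⟩⟩ <;>
      · rw [hx] at hy; exact nomatch hy

/-!
Joining the two external legs into one extra line of colour `c` completes every `M ℓ` to a perfect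
matching. With `G` the underlying graph, the completed graph `H = G + v_A v_B` has no cut vertex:
two neighbours of a vertex `v` along colours `ℓ, ℓ'` are joined, avoiding `v`, by the cycle
through `v` alternating between colours `ℓ` and `ℓ'`.

The ordering is built greedily from `v_A`. Given a cut `(A, B)` of `H` with `v_B ∈ B`, some
`x ∈ B ∖ {v_B}` adjacent to `A` keeps `B - x` connected: take such an `x` for which the part of
`B - x` separated from `v_B` is smallest; were it nonempty, a path avoiding `x` from it to `v_B`
would leave `B` and give a candidate with a strictly smaller separated part. Proper prefixes and
suffixes never contain both `v_A` and `v_B`, so the extra line plays no role in their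
connectivity in `G`.
-/

open Finset

lemma List.Nodup.mem_take_iff_notMem_drop {α : Type*} {L : List α} (hL : L.Nodup) {x : α}
    (hx : x ∈ L) (p : ℕ) : x ∈ L.take p ↔ x ∉ L.drop p := by
  refine ⟨fun ht hd => List.disjoint_take_drop hL le_rfl ht hd, fun hd => ?_⟩
  rw [← List.take_append_drop p L] at hx
  exact (List.mem_append.1 hx).resolve_right hd

open Function in
/-- The orbit of `u` returns to `u`, and the point just before the return is `σ⁻¹ u`. -/
lemma Equiv.Perm.reflTransGen_symm_apply {α : Type*} [Finite α] (σ : Equiv.Perm α)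
    {r : α → α → Prop} (u : α) (h : ∀ p, σ p ≠ u → r p (σ p)) :
    Relation.ReflTransGen r u (σ.symm u) := by
  set m := minimalPeriod σ u
  have hm : 0 < m := minimalPeriod_pos_of_mem_periodicPts (σ.injective.mem_periodicPts u)
  have chain : ∀ k < m, Relation.ReflTransGen r u (σ^[k] u) := by
    intro k
    induction k with
    | zero => exact fun _ => .refl
    | succ k ih =>
      intro hk
      rw [iterate_succ_apply' σ]
      refine (ih (by omega)).tail (h _ ?_)
      rw [← iterate_succ_apply' σ]
      exact not_isPeriodicPt_of_pos_of_lt_minimalPeriod k.succ_ne_zero hk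
  have hlast : σ^[m - 1] u = σ.symm u := by
    rw [Equiv.eq_symm_apply, ← iterate_succ_apply' σ, Nat.succ_eq_add_one, Nat.sub_add_cancel hm]
    exact isPeriodicPt_minimalPeriod σ u
  exact hlast ▸ chain (m - 1) (by omega)

namespace SimpleGraph

variable {V : Type*} {G H : SimpleGraph V}

/-- The empty walk makes `H.ReachIn S x x` true even for `x ∉ S`. -/
def ReachIn (H : SimpleGraph V) (S : Finset V) : V → V → Prop :=
  Relation.ReflTransGen fun u v => H.Adj u v ∧ u ∈ S ∧ v ∈ S

def ConnectedOn (H : SimpleGraph V) (S : Finset V) : Prop :=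
  ∀ x ∈ S, ∀ y ∈ S, H.ReachIn S x y

namespace ReachIn

variable {S T : Finset V} {x y z : V}

@[refl] lemma refl : H.ReachIn S x x := Relation.ReflTransGen.refl

lemma trans (h : H.ReachIn S x y) (h' : H.ReachIn S y z) : H.ReachIn S x z :=
  Relation.ReflTransGen.trans h h'

lemma single (hxy : H.Adj x y) (hx : x ∈ S) (hy : y ∈ S) : H.ReachIn S x y :=
  Relation.ReflTransGen.single ⟨hxy, hx, hy⟩

lemma symm (h : H.ReachIn S x y) : H.ReachIn S y x := by
  induction h with
  | refl => rfl
  | tail _ hst ih => exact (single hst.1.symm hst.2.2 hst.2.1).trans ih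

lemma mono (hST : S ⊆ T) (h : H.ReachIn S x y) : H.ReachIn T x y :=
  Relation.ReflTransGen.mono (fun _ _ h => ⟨h.1, hST h.2.1, hST h.2.2⟩) _ _ h

lemma mem_left (h : H.ReachIn S x y) (hxy : x ≠ y) : x ∈ S := by
  rcases h.cases_head with rfl | ⟨_, hst, _⟩
  exacts [absurd rfl hxy, hst.2.1]

lemma mem_right (h : H.ReachIn S x y) (hxy : x ≠ y) : y ∈ S :=
  h.symm.mem_left hxy.symm

lemma exists_adj_of_mem_of_notMem {P : Set V} (h : H.ReachIn S x y) (hx : x ∈ P)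
    (hy : y ∉ P) : ∃ u ∈ P, ∃ w ∉ P, u ∈ S ∧ w ∈ S ∧ H.Adj u w := by
  induction h with
  | refl => exact absurd hx hy
  | @tail u w _ huw ih =>
    by_cases hu : u ∈ P
    · exact ⟨u, hu, w, hy, huw.2.1, huw.2.2, huw.1⟩
    · exact ih hu

lemma exists_adj_reachIn_erase [DecidableEq V] (h : H.ReachIn S x z) (hxz : x ≠ z) :
    ∃ u ∈ S.erase z, H.Adj u z ∧ H.ReachIn (S.erase z) x u := by
  suffices ∀ y, H.ReachIn S x y → H.ReachIn (S.erase z) x y ∨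
      ∃ u ∈ S.erase z, H.Adj u z ∧ H.ReachIn (S.erase z) x u by
    rcases this z h with h' | h'
    · exact absurd (h'.mem_right hxz) (notMem_erase z S)
    · exact h'
  intro y hy
  induction hy with
  | refl => exact Or.inl refl
  | @tail u w _ huw ih =>
    refine ih.elim (fun hxu => ?_) Or.inr
    have hu : u ∈ S.erase z := by
      refine mem_erase.2 ⟨?_, huw.2.1⟩
      rintro rfl
      exact notMem_erase u S (hxu.mem_right hxz)
    by_cases hw : w = z
    · exact Or.inr ⟨u, hu, hw ▸ huw.1, hxu⟩
    · exact Or.inl (hxu.trans (single huw.1 hu (mem_erase.2 ⟨hw, huw.2.2⟩)))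

lemma of_forall_reachIn (h : H.ReachIn S x z) (hT : ∀ u ∈ S, H.ReachIn S u z → u ∈ T) :
    H.ReachIn T x z := by
  induction h using Relation.ReflTransGen.head_induction_on with
  | refl => rfl
  | head huw hwz ih =>
    exact (single huw.1 (hT _ huw.2.1 (Relation.ReflTransGen.head huw hwz))
      (hT _ huw.2.2 hwz)).trans ih

lemma mono_left (hGH : G ≤ H) (h : G.ReachIn S x y) : H.ReachIn S x y :=
  Relation.ReflTransGen.mono (fun _ _ h => ⟨hGH h.1, h.2⟩) _ _ h

end ReachIn

namespace ConnectedOn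

variable {S : Finset V}

lemma of_forall_reachIn (t : V) (h : ∀ v ∈ S, H.ReachIn S v t) : H.ConnectedOn S :=
  fun x hx y hy => (h x hx).trans (h y hy).symm

lemma singleton (x : V) : H.ConnectedOn {x} := by
  rintro u hu v hv
  rw [mem_singleton] at hu hv
  subst hu hv
  rfl

lemma insert [DecidableEq V] (hS : H.ConnectedOn S) {x y : V} (hy : y ∈ S) (hxy : H.Adj x y) :
    H.ConnectedOn (insert x S) :=
  of_forall_reachIn y fun v hv => by
    rcases mem_insert.1 hv with rfl | hv
    · exact ReachIn.single hxy (mem_insert_self _ _) (mem_insert_of_mem hy)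
    · exact (hS v hv y hy).mono (subset_insert _ _)

lemma of_sup_edge {a b : V} (h : (G ⊔ edge a b).ConnectedOn S) (hS : a ∉ S ∨ b ∉ S) :
    G.ConnectedOn S := fun x hx y hy =>
  Relation.ReflTransGen.mono (fun u v ⟨huv, hu, hv⟩ => ⟨by aesop (add simp edge_adj), hu, hv⟩)
    _ _ (h x hx y hy)

lemma connected_induce (hS : H.ConnectedOn S) (hne : S.Nonempty) :
    (H.induce (S : Set V)).Connected := by
  have reachable {x y : V} (hx : x ∈ S) (h : H.ReachIn S x y) (hy : y ∈ S) :
      (H.induce (S : Set V)).Reachable ⟨x, hx⟩ ⟨y, hy⟩ := by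
    induction h with
    | refl => rfl
    | tail _ huv ih => exact (ih huv.2.1).trans (Adj.reachable huv.1)
  rw [connected_iff]
  exact ⟨fun ⟨x, hx⟩ ⟨y, hy⟩ => reachable hx (hS x hx y hy) hy, ⟨⟨_, hne.choose_spec⟩⟩⟩

end ConnectedOn

section NoCutVertex

variable [Fintype V] [DecidableEq V]

def NoCutVertex (H : SimpleGraph V) : Prop :=
  ∀ v x y, x ≠ v → y ≠ v → H.ReachIn (univ.erase v) x y

lemma NoCutVertex.mono (hGH : G ≤ H) (hG : G.NoCutVertex) : H.NoCutVertex :=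
  fun v x y hx hy => (hG v x y hx hy).mono_left hGH

/-- A walk between two vertices other than `v` is rerouted around each of its visits to `v`. -/
lemma NoCutVertex.of_connected (hH : H.Connected)
    (hnb : ∀ v x y, H.Adj v x → H.Adj v y → H.ReachIn (univ.erase v) x y) : H.NoCutVertex := by
  intro v x y hx hy
  have key : ∀ {x y} (p : H.Walk x y), y ≠ v → (x ≠ v → H.ReachIn (univ.erase v) x y) ∧
      (x = v → ∀ u, H.Adj v u → H.ReachIn (univ.erase v) u y) := by
    intro x y p hy
    induction p with
    | nil => exact ⟨fun _ => ReachIn.refl, fun hxv => absurd hxv hy⟩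
    | @cons x z _ hxz _ ih =>
      refine ⟨fun hxv => ?_, ?_⟩
      · by_cases hzv : z = v
        · exact (ih hy).2 hzv x (hzv ▸ hxz.symm)
        · exact (ReachIn.single hxz (mem_erase.2 ⟨hxv, mem_univ _⟩)
            (mem_erase.2 ⟨hzv, mem_univ _⟩)).trans ((ih hy).1 hzv)
      · rintro rfl u hu
        exact (hnb x u z hu hxz).trans ((ih hy).1 hxz.ne.symm)
  exact (key (hH.preconnected x y).some hy).1 hx

end NoCutVertex

section Removable

variable [DecidableEq V] {B : Finset V} {t u w x : V}

open Classical in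
noncomputable def cutOff (H : SimpleGraph V) (B : Finset V) (t x : V) : Finset V :=
  (B.erase x).filter fun u => ¬ H.ReachIn (B.erase x) u t

lemma mem_cutOff : u ∈ H.cutOff B t x ↔ u ∈ B.erase x ∧ ¬ H.ReachIn (B.erase x) u t := by
  classical
  simp [cutOff]

lemma ne_of_mem_cutOff (hu : u ∈ H.cutOff B t x) : u ≠ t := by
  rintro rfl
  exact (mem_cutOff.1 hu).2 ReachIn.refl

lemma connectedOn_erase_of_cutOff_eq_empty (h : H.cutOff B t x = ∅) :
    H.ConnectedOn (B.erase x) :=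
  ConnectedOn.of_forall_reachIn t fun v hv => by
    by_contra hvt
    exact notMem_empty v (h ▸ mem_cutOff.2 ⟨hv, hvt⟩)

lemma cutOff_ssubset (hB : H.ConnectedOn B) (ht : t ∈ B) (hx : x ∈ B) (hxt : x ≠ t)
    (hw : w ∈ H.cutOff B t x) : H.cutOff B t w ⊂ H.cutOff B t x := by
  obtain ⟨hwx, hwt⟩ := mem_cutOff.1 hw
  have avoid {v : V} (hv : H.ReachIn (B.erase x) v t) : H.ReachIn (B.erase w) v t :=
    hv.of_forall_reachIn fun u hu hut =>
      mem_erase.2 ⟨by rintro rfl; exact hwt hut, mem_of_mem_erase hu⟩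
  -- `x` reaches `t` through its neighbour on a walk from `t`, just before the first visit to `x`
  have hxw : H.ReachIn (B.erase w) x t := by
    obtain ⟨u, hu, hux, htu⟩ := (hB t ht x hx).exists_adj_reachIn_erase hxt.symm
    have huw : u ≠ w := by rintro rfl; exact hwt htu.symm
    exact (ReachIn.single hux.symm (mem_erase.2 ⟨(ne_of_mem_erase hwx).symm, hx⟩)
      (mem_erase.2 ⟨huw, mem_of_mem_erase hu⟩)).trans (avoid htu.symm)
  have hsub : H.cutOff B t w ⊆ (H.cutOff B t x).erase w := fun v hv => by
    obtain ⟨hvw, hvt⟩ := mem_cutOff.1 hv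
    have hvx : v ≠ x := by rintro rfl; exact hvt hxw
    exact mem_erase.2 ⟨ne_of_mem_erase hvw,
      mem_cutOff.2 ⟨mem_erase.2 ⟨hvx, mem_of_mem_erase hvw⟩, fun h => hvt (avoid h)⟩⟩
  exact hsub.trans_ssubset (erase_ssubset hw)

lemma exists_adj_compl_of_cutOff_nonempty [Fintype V] (hH : H.NoCutVertex) (hxt : x ≠ t)
    (hne : (H.cutOff B t x).Nonempty) : ∃ w ∈ H.cutOff B t x, ∃ y ∉ B, H.Adj w y := by
  obtain ⟨u, hu⟩ := hne
  have hux : u ≠ x := ne_of_mem_erase (mem_cutOff.1 hu).1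
  have ht : t ∉ (H.cutOff B t x : Set V) := fun h => ne_of_mem_cutOff h rfl
  obtain ⟨w, hw, y, hy, -, hyx, hwy⟩ :=
    (hH x u t hux hxt.symm).exists_adj_of_mem_of_notMem (P := H.cutOff B t x) hu ht
  refine ⟨w, hw, y, fun hyB => ?_, hwy⟩
  have hyB' : y ∈ B.erase x := mem_erase.2 ⟨ne_of_mem_erase hyx, hyB⟩
  have hyt : H.ReachIn (B.erase x) y t := by
    by_contra h
    exact hy (mem_cutOff.2 ⟨hyB', h⟩)
  exact (mem_cutOff.1 hw).2 ((ReachIn.single hwy (mem_cutOff.1 hw).1 hyB').trans hyt)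

/-- A candidate `x` minimising `cutOff B t x` works: otherwise `cutOff_ssubset` and
`exists_adj_compl_of_cutOff_nonempty` produce a candidate with a smaller cut-off part. -/
theorem exists_removable [Fintype V] (hH : H.NoCutVertex) (hB : H.ConnectedOn B) (ht : t ∈ B)
    (h : ∃ x ∈ B, x ≠ t ∧ ∃ y ∉ B, H.Adj x y) :
    ∃ x ∈ B, x ≠ t ∧ (∃ y ∉ B, H.Adj x y) ∧ H.ConnectedOn (B.erase x) := by
  classical
  obtain ⟨x, hxX, hmin⟩ := (B.filter fun x => x ≠ t ∧ ∃ y ∉ B, H.Adj x y).exists_min_image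
    (fun x => (H.cutOff B t x).card) (by simpa [Finset.Nonempty] using h)
  obtain ⟨hx, hxt, hxy⟩ := by simpa using hxX
  refine ⟨x, hx, hxt, hxy, connectedOn_erase_of_cutOff_eq_empty (t := t) ?_⟩
  by_contra hne
  obtain ⟨w, hw, y, hy, hwy⟩ :=
    exists_adj_compl_of_cutOff_nonempty hH hxt (nonempty_iff_ne_empty.2 hne)
  have hwX : w ∈ B.filter fun x => x ≠ t ∧ ∃ y ∉ B, H.Adj x y :=
    mem_filter.2 ⟨mem_of_mem_erase (mem_cutOff.1 hw).1, ne_of_mem_cutOff hw, y, hy, hwy⟩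
  exact (card_lt_card (cutOff_ssubset hB ht hx hxt hw)).not_ge (hmin w hwX)

end Removable

/-- The `f`- and `g`-partners of `ia u` are joined along the cycle through `ia u` alternating
between `f`-edges and `g`-edges. -/
lemma reachIn_erase_of_equiv [Fintype V] [DecidableEq V] {α β : Type*} {ia : α → V}
    {ib : β → V} (hia : Function.Injective ia) (hne : ∀ p q, ia p ≠ ib q) (f g : α ≃ β)
    (hf : ∀ p, H.Adj (ia p) (ib (f p))) (hg : ∀ p, H.Adj (ia p) (ib (g p))) (u : α) :
    H.ReachIn (univ.erase (ia u)) (ib (f u)) (ib (g u)) := by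
  have := Finite.of_injective ia hia
  set σ : Equiv.Perm α := f.trans g.symm
  have hib (q : β) : ib q ∈ univ.erase (ia u) := mem_erase.2 ⟨(hne u q).symm, mem_univ _⟩
  have step (p : α) (hp : σ p ≠ u) :
      H.ReachIn (univ.erase (ia u)) (ib (f p)) (ib (f (σ p))) := by
    have hσp : ia (σ p) ∈ univ.erase (ia u) := mem_erase.2 ⟨hia.ne hp, mem_univ _⟩
    have hgσ : g (σ p) = f p := by simp [σ]
    exact (ReachIn.single (hgσ ▸ hg _).symm (hib _) hσp).trans (ReachIn.single (hf _) hσp (hib _))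
  have := Relation.ReflTransGen.lift' (fun p => ib (f p))
    (fun p q (h : H.ReachIn _ (ib (f p)) (ib (f q))) => h) _ _
    (σ.reflTransGen_symm_apply u step)
  rwa [Function.onFun, Equiv.symm_trans_apply, Equiv.symm_symm, Equiv.apply_symm_apply] at this

section STOrdering

variable [Fintype V] [DecidableEq V]

theorem exists_list_suffix_cuts (hH : H.NoCutVertex) {a b : V} (B : Finset V) (ha : a ∉ B)
    (hb : b ∈ B) (hB : H.ConnectedOn B) (hBc : H.ConnectedOn Bᶜ) :
    ∃ l : List V, l.Nodup ∧ l.toFinset = B ∧ l.getLast? = some b ∧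
      ∀ j < l.length,
        H.ConnectedOn (l.drop j).toFinset ∧ H.ConnectedOn (l.drop j).toFinsetᶜ := by
  induction B using Finset.strongInduction with
  | H B ih =>
  by_cases hBb : B = {b}
  · subst hBb
    refine ⟨[b], List.nodup_singleton b, by simp, rfl, fun j hj => ?_⟩
    obtain rfl : j = 0 := by simpa using hj
    simpa using ⟨hB, hBc⟩
  obtain ⟨z, hz, hzb⟩ : ∃ z ∈ B, z ≠ b := by
    by_contra! h
    exact hBb (eq_singleton_iff_unique_mem.2 ⟨hb, h⟩)
  -- a walk from `z` to `a` avoiding `b` leaves `B` through an edge starting at a vertex `≠ b`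
  obtain ⟨u, hu, y, hy, hub, -, huy⟩ :=
    (hH b z a hzb (ne_of_mem_of_not_mem hb ha).symm).exists_adj_of_mem_of_notMem
      (P := (B : Set V)) hz ha
  obtain ⟨x, hx, hxb, ⟨y', hy', hxy'⟩, hBx⟩ :=
    exists_removable hH hB hb ⟨u, hu, ne_of_mem_erase hub, y, hy, huy⟩
  obtain ⟨l, hnd, hl, hlast, hcuts⟩ :=
    ih (B.erase x) (erase_ssubset hx) (fun h => ha (mem_of_mem_erase h))
      (mem_erase.2 ⟨hxb.symm, hb⟩) hBx
      (by rw [compl_erase]; exact hBc.insert (mem_compl.2 hy') hxy')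
  have hxl : x ∉ l := by simp [← List.mem_toFinset, hl]
  have hxl_B : (x :: l).toFinset = B := by simp [hl, insert_erase hx]
  refine ⟨x :: l, hnd.cons hxl, hxl_B, by simp [List.getLast?_cons, hlast], ?_⟩
  rintro (_ | j) hj
  · simpa [hxl_B] using ⟨hB, hBc⟩
  · exact hcuts j (by simpa using hj)

def IsSTOrdering (G : SimpleGraph V) (a b : V) (L : List V) : Prop :=
  L.Nodup ∧ (∀ x, x ∈ L) ∧ L.head? = some a ∧ L.getLast? = some b ∧
    ∀ p, 1 ≤ p → p ≤ L.length - 1 →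
      (G.induce {x | x ∈ L.take p}).Connected ∧ (G.induce {x | x ∈ L.drop p}).Connected

/-- The edge `ab` only matters for sets containing both `a` and `b`, which no proper prefix or
suffix of an ordering from `a` to `b` does. -/
theorem exists_isSTOrdering {a b : V} (hab : a ≠ b) (hH : (G ⊔ edge a b).NoCutVertex) :
    ∃ L, G.IsSTOrdering a b L := by
  obtain ⟨l, hnd, hl, hlast, hcuts⟩ := exists_list_suffix_cuts hH (univ.erase a)
    (notMem_erase a _) (mem_erase.2 ⟨hab.symm, mem_univ b⟩)
    (fun x hx y hy => hH a x y (ne_of_mem_erase hx) (ne_of_mem_erase hy))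
    (by simpa [compl_erase] using ConnectedOn.singleton a)
  have hal : a ∉ l := by simp [← List.mem_toFinset, hl]
  have hmem (x : V) : x ∈ a :: l := by
    by_cases hxa : x = a
    · exact hxa ▸ List.mem_cons_self
    · exact List.mem_cons_of_mem _ (by simp [← List.mem_toFinset, hl, hxa])
  refine ⟨a :: l, hnd.cons hal, hmem, rfl, by simp [List.getLast?_cons, hlast], ?_⟩
  intro p hp1 hp
  obtain ⟨j, rfl⟩ : ∃ j, p = j + 1 := ⟨p - 1, by omega⟩
  have hj : j < l.length := by simp only [List.length_cons] at hp; omega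
  obtain ⟨hS, hSc⟩ := hcuts j hj
  have hbS : b ∈ l.drop j :=
    List.mem_of_getLast? (by rw [List.getLast?_drop, if_neg (by omega), hlast])
  have haS : a ∉ l.drop j := fun h => hal (List.drop_subset j l h)
  have htake :
      {x | x ∈ (a :: l).take (j + 1)} = (((l.drop j).toFinsetᶜ : Finset V) : Set V) := by
    ext x
    rw [Set.mem_ofPred_eq, (hnd.cons hal).mem_take_iff_notMem_drop (hmem x)]
    simp
  have hdrop : {x | x ∈ (a :: l).drop (j + 1)} = ((l.drop j).toFinset : Set V) := by
    ext x
    simp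
  rw [htake, hdrop]
  exact ⟨(hSc.of_sup_edge (Or.inr (by simpa using hbS))).connected_induce
      ⟨a, by simpa using haS⟩,
    (hS.of_sup_edge (Or.inl (by simpa using haS))).connected_induce ⟨b, by simpa using hbS⟩⟩

end STOrdering

end SimpleGraph

section ColoredGraph

open SimpleGraph

variable {D : ℕ} {Vp Vm : Type*} {M : Fin (D + 1) → Vp → Option Vm}

lemma adjColor_inl_left_iff {ℓ : Fin (D + 1)} {p : Vp} {x : Vp ⊕ Vm} :
    AdjColor M ℓ (Sum.inl p) x ↔ ∃ w, x = Sum.inr w ∧ M ℓ p = some w := by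
  simp [AdjColor]

lemma adjColor_inr_left_iff {ℓ : Fin (D + 1)} {w : Vm} {x : Vp ⊕ Vm} :
    AdjColor M ℓ (Sum.inr w) x ↔ ∃ p, x = Sum.inl p ∧ M ℓ p = some w := by
  simp [AdjColor]

lemma underlyingGraph_le_getD (vB : Vm) :
    underlyingGraph M ≤ underlyingGraph fun ℓ v => some ((M ℓ v).getD vB) := by
  rintro x y ⟨ℓ, ⟨v, w, hx, hy, hw⟩ | ⟨v, w, hx, hy, hw⟩⟩
  exacts [⟨ℓ, Or.inl ⟨v, w, hx, hy, by simp [hw]⟩⟩, ⟨ℓ, Or.inr ⟨v, w, hx, hy, by simp [hw]⟩⟩]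

lemma underlyingGraph_getD_le_sup_edge {vA : Vp} {vB : Vm}
    (hA : ∀ ℓ v, M ℓ v = none → v = vA) :
    underlyingGraph (fun ℓ v => some ((M ℓ v).getD vB)) ≤
      underlyingGraph M ⊔ edge (Sum.inl vA) (Sum.inr vB) := by
  have key (ℓ v w) (h : some ((M ℓ v).getD vB) = some w) :
      M ℓ v = some w ∨ (v = vA ∧ w = vB) := by
    rcases hv : M ℓ v with _ | w'
    · simp only [hv, Option.getD_none, Option.some_inj] at h
      exact Or.inr ⟨hA ℓ v hv, h.symm⟩
    · exact Or.inl (by simpa [hv] using h)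
  rintro x y ⟨ℓ, ⟨v, w, rfl, rfl, hw⟩ | ⟨v, w, rfl, rfl, hw⟩⟩ <;>
    rcases key ℓ v w hw with hw | ⟨rfl, rfl⟩
  · exact Or.inl ⟨ℓ, Or.inl ⟨v, w, rfl, rfl, hw⟩⟩
  · exact Or.inr (by simp [edge_adj])
  · exact Or.inl ⟨ℓ, Or.inr ⟨v, w, rfl, rfl, hw⟩⟩
  · exact Or.inr (by simp [edge_adj])

/-- Sending the two external legs to each other completes every `M ℓ` to a perfect matching. -/
lemma bijective_getD (hinj : ∀ ℓ v v' w, M ℓ v = some w → M ℓ v' = some w → v = v')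
    {c : Fin (D + 1)} {vA : Vp} {vB : Vm} (hA : M c vA = none) (hB : ∀ v, M c v ≠ some vB)
    (honly₁ : ∀ ℓ v, M ℓ v = none → ℓ = c ∧ v = vA)
    (honly₂ : ∀ ℓ w, (∀ v, M ℓ v ≠ some w) → ℓ = c ∧ w = vB) (ℓ : Fin (D + 1)) :
    Function.Bijective fun v => (M ℓ v).getD vB := by
  refine ⟨fun v v' h => ?_, fun w => ?_⟩
  · rcases hv : M ℓ v with _ | w <;> rcases hv' : M ℓ v' with _ | w' <;>
      simp only [hv, hv', Option.getD_none, Option.getD_some] at h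
    · exact (honly₁ ℓ v hv).2.trans (honly₁ ℓ v' hv').2.symm
    · obtain ⟨rfl, -⟩ := honly₁ ℓ v hv
      exact absurd (h ▸ hv') (hB v')
    · obtain ⟨rfl, -⟩ := honly₁ ℓ v' hv'
      exact absurd (h ▸ hv) (hB v)
    · exact hinj ℓ v v' w hv (h ▸ hv')
  · by_cases hw : ∃ v, M ℓ v = some w
    · obtain ⟨v, hv⟩ := hw
      exact ⟨v, by simp [hv]⟩
    · simp only [not_exists] at hw
      obtain ⟨rfl, rfl⟩ := honly₂ ℓ w hw
      exact ⟨vA, by simp [hA]⟩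

lemma noCutVertex_underlyingGraph_of_bijective [Fintype Vp] [Fintype Vm]
    [DecidableEq (Vp ⊕ Vm)] {N : Fin (D + 1) → Vp → Vm} (hN : ∀ ℓ, Function.Bijective (N ℓ))
    (hconn : (underlyingGraph fun ℓ v => some (N ℓ v)).Connected) :
    (underlyingGraph fun ℓ v => some (N ℓ v)).NoCutVertex := by
  set e := fun ℓ => Equiv.ofBijective (N ℓ) (hN ℓ)
  have hadj (ℓ) (p : Vp) :
      (underlyingGraph fun ℓ v => some (N ℓ v)).Adj (Sum.inl p) (Sum.inr (e ℓ p)) :=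
    ⟨ℓ, Or.inl ⟨p, _, rfl, rfl, rfl⟩⟩
  have hadj' (ℓ) (w : Vm) :
      (underlyingGraph fun ℓ v => some (N ℓ v)).Adj (Sum.inr w) (Sum.inl ((e ℓ).symm w)) := by
    simpa using (hadj ℓ ((e ℓ).symm w)).symm
  refine NoCutVertex.of_connected hconn ?_
  rintro (p | w) x y ⟨ℓ, hx⟩ ⟨ℓ', hy⟩
  · obtain ⟨_, rfl, hxw⟩ := adjColor_inl_left_iff.1 hx
    obtain ⟨_, rfl, hyw⟩ := adjColor_inl_left_iff.1 hy
    cases Option.some_injective _ hxw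
    cases Option.some_injective _ hyw
    exact reachIn_erase_of_equiv (ib := Sum.inr) Sum.inl_injective (fun _ _ => Sum.inl_ne_inr)
      (e ℓ) (e ℓ') (hadj ℓ) (hadj ℓ') p
  · obtain ⟨p, rfl, hxw⟩ := adjColor_inr_left_iff.1 hx
    obtain ⟨p', rfl, hyw⟩ := adjColor_inr_left_iff.1 hy
    obtain rfl : p = (e ℓ).symm w := (e ℓ).eq_symm_apply.2 (Option.some_injective _ hxw)
    obtain rfl : p' = (e ℓ').symm w := (e ℓ').eq_symm_apply.2 (Option.some_injective _ hyw)
    exact reachIn_erase_of_equiv (ib := Sum.inl) Sum.inr_injective (fun _ _ => Sum.inr_ne_inl)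
      (e ℓ).symm (e ℓ').symm (hadj' ℓ) (hadj' ℓ') w

end ColoredGraph

theorem exists_exhausting_sequence_of_cuts_general (D : ℕ)
    (Vp Vm : Type*) [Fintype Vp] [Fintype Vm]
    (M : Fin (D + 1) → Vp → Option Vm)
    (hinj : ∀ ℓ v v' w, M ℓ v = some w → M ℓ v' = some w → v = v')
    (hconn : (underlyingGraph M).Connected)
    (c : Fin (D + 1)) (vA : Vp) (vB : Vm)
    -- `v_A` carries an external leg of color `c` :
    (hA : M c vA = none)
    -- `v_B` carries an external leg of color `c` :
    (hB : ∀ v, M c v ≠ some vB)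
    -- these are the only external legs: every matching `M ℓ` with `ℓ ≠ c` covers all vertices
    -- and `M c` covers all vertices except `v_A` and `v_B` :
    (honly₁ : ∀ ℓ v, M ℓ v = none → ℓ = c ∧ v = vA)
    (honly₂ : ∀ ℓ w, (∀ v, M ℓ v ≠ some w) → ℓ = c ∧ w = vB) :
    ∃ L : List (Vp ⊕ Vm), L.Nodup ∧ (∀ x, x ∈ L) ∧
      L.head? = some (Sum.inl vA) ∧ L.getLast? = some (Sum.inr vB) ∧
      ∀ p, 1 ≤ p → p ≤ L.length - 1 →
        ((underlyingGraph M).induce {x | x ∈ L.take p}).Connected ∧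
        ((underlyingGraph M).induce {x | x ∈ L.drop p}).Connected := by
  classical
  have hN := bijective_getD hinj hA hB honly₁ honly₂
  have hcompleted := noCutVertex_underlyingGraph_of_bijective hN
    (hconn.mono (underlyingGraph_le_getD vB))
  exact SimpleGraph.exists_isSTOrdering Sum.inl_ne_inr
    (hcompleted.mono (underlyingGraph_getD_le_sup_edge fun ℓ v h => (honly₁ ℓ v h).2))

/-- every connected colored two-point graph admits an exhausting sequence of
cuts.  If the underlying graph of a colored graph of dimension `D` is connected and the graph
has exactly two external legs, both of color `c`, carried by `v_A ∈ V₊` and `v_B ∈ V₋`, then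
there is an enumeration `v₁, …, v_n` of all the vertices (a duplicate-free list `L` containing
every vertex) starting at `v_A` and ending at `v_B` such that for every `1 ≤ p ≤ n - 1` both
the subgraph induced by `A_p = {v₁, …, v_p}` and the subgraph induced by its complement
`B_p = {v_{p+1}, …, v_n}` are connected. -/
theorem exists_exhausting_sequence_of_cuts (D : ℕ) (hD : 1 ≤ D)
    (Vp Vm : Type*) [Fintype Vp] [Fintype Vm]
    (M : Fin (D + 1) → Vp → Option Vm)
    (hinj : ∀ ℓ v v' w, M ℓ v = some w → M ℓ v' = some w → v = v')
    (hconn : (underlyingGraph M).Connected)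
    (c : Fin (D + 1)) (vA : Vp) (vB : Vm)
    -- `v_A` carries an external leg of color `c` :
    (hA : M c vA = none)
    -- `v_B` carries an external leg of color `c` :
    (hB : ∀ v, M c v ≠ some vB)
    -- these are the only external legs: every matching `M ℓ` with `ℓ ≠ c` covers all vertices
    -- and `M c` covers all vertices except `v_A` and `v_B` :
    (honly₁ : ∀ ℓ v, M ℓ v = none → ℓ = c ∧ v = vA)
    (honly₂ : ∀ ℓ w, (∀ v, M ℓ v ≠ some w) → ℓ = c ∧ w = vB) :
    ∃ L : List (Vp ⊕ Vm), L.Nodup ∧ (∀ x, x ∈ L) ∧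
      L.head? = some (Sum.inl vA) ∧ L.getLast? = some (Sum.inr vB) ∧
      ∀ p, 1 ≤ p → p ≤ L.length - 1 →
        ((underlyingGraph M).induce {x | x ∈ L.take p}).Connected ∧
        ((underlyingGraph M).induce {x | x ∈ L.drop p}).Connected :=
  exists_exhausting_sequence_of_cuts_general D Vp Vm M hinj hconn c vA vB hA hB honly₁ honly₂
end

section
/- Let M be a square complex matrix with M² = 0. Then the trace of every odd power of the Hermitian matrix S = M + Mᴴ vanishes: for every natural number p, tr(S^{2p+1}) = 0. -/
open scoped Matrix

/-- If `M` is a square complex matrix with `M * M = 0`, then the trace of every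
odd power of the Hermitian matrix `S = M + Mᴴ` vanishes: `tr (S ^ (2p+1)) = 0`. -/
theorem trace_odd_pow_add_conjTranspose_eq_zero {n : ℕ}
    (M : Matrix (Fin n) (Fin n) ℂ) (hM : M * M = 0) (p : ℕ) :
    ((M + Mᴴ) ^ (2 * p + 1)).trace = 0 := by
  have hMH : Mᴴ * Mᴴ = 0 := by
    rw [← Matrix.conjTranspose_mul, hM, Matrix.conjTranspose_zero]
  set A := M * Mᴴ with hA
  set B := Mᴴ * M with hB
  have hS2 : (M + Mᴴ) * (M + Mᴴ) = A + B := by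
    rw [add_mul, mul_add, mul_add, hM, hMH, zero_add, add_zero]
  have hAB : A * B = 0 := by
    rw [hA, hB, mul_assoc, ← mul_assoc Mᴴ, hMH, zero_mul, mul_zero]
  have hBA : B * A = 0 := by
    rw [hA, hB, mul_assoc, ← mul_assoc M, hM, zero_mul, mul_zero]
  have hpow : ∀ k : ℕ, (A + B) ^ (k + 1) = A ^ (k + 1) + B ^ (k + 1) := by
    intro k
    induction k with
    | zero => simp
    | succ k ih =>
      simp [pow_succ, ih, add_mul, mul_add, mul_assoc, hAB, hBA]
  have htrM : M.trace = 0 := by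
    have hnil : IsNilpotent M := ⟨2, by rw [pow_two, hM]⟩
    exact (Matrix.isNilpotent_trace_of_isNilpotent hnil).eq_zero
  have htrMH : Mᴴ.trace = 0 := by
    rw [Matrix.trace_conjTranspose, htrM, star_zero]
  cases p with
  | zero => simp [Matrix.trace_add, Matrix.trace_conjTranspose, htrM]
  | succ k =>
    have hMA : M * A = 0 := by rw [hA, ← mul_assoc, hM, zero_mul]
    have hAMH : A * Mᴴ = 0 := by rw [hA, mul_assoc, hMH, mul_zero]
    have hBM : B * M = 0 := by rw [hB, mul_assoc, hM, mul_zero]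
    have hMHB : Mᴴ * B = 0 := by rw [hB, ← mul_assoc, hMH, zero_mul]
    have e1 : (A ^ (k + 1) * M).trace = 0 := by
      rw [Matrix.trace_mul_comm, pow_succ', ← mul_assoc, hMA, zero_mul,
        Matrix.trace_zero]
    have e2 : (A ^ (k + 1) * Mᴴ).trace = 0 := by
      rw [pow_succ, mul_assoc, hAMH, mul_zero, Matrix.trace_zero]
    have e3 : (B ^ (k + 1) * M).trace = 0 := by
      rw [pow_succ, mul_assoc, hBM, mul_zero, Matrix.trace_zero]
    have e4 : (B ^ (k + 1) * Mᴴ).trace = 0 := by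
      rw [Matrix.trace_mul_comm, pow_succ', ← mul_assoc, hMHB, zero_mul,
        Matrix.trace_zero]
    have key : (M + Mᴴ) ^ (2 * (k + 1) + 1)
        = (A ^ (k + 1) + B ^ (k + 1)) * (M + Mᴴ) := by
      rw [pow_succ, pow_mul, pow_two, hS2, hpow]
    rw [key, add_mul, mul_add, mul_add, Matrix.trace_add, Matrix.trace_add,
      Matrix.trace_add, e1, e2, e3, e4]
    ring
end

section
/- Let M be a square complex matrix with M² = 0, and set S = M + Mᴴ. Then for every complex number z, det(I + z·S) = det(I − z·S). -/
open scoped Matrix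

open Polynomial in
lemma det_one_sub_of_sq_eq_zero {n : ℕ} (N : Matrix (Fin n) (Fin n) ℂ)
    (h : N * N = 0) : (1 - N).det = 1 := by
  have hnil : IsNilpotent N := ⟨2, by simpa [pow_two] using h⟩
  have hu := Matrix.isUnit_charpolyRev_of_isNilpotent hnil
  obtain ⟨r, -, hr⟩ := Polynomial.isUnit_iff.mp hu
  have heval : ∀ t : ℂ, Polynomial.eval t N.charpolyRev = (1 - t • N).det := by
    intro t
    rw [Matrix.charpolyRev, ← Polynomial.coe_evalRingHom, RingHom.map_det]
    congr 1
    ext i j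
    rcases eq_or_ne i j with hij | hij <;>
      · simp [hij, Matrix.one_apply, Matrix.sub_apply, Matrix.smul_apply]
        ring
  have h0 : Polynomial.eval 0 N.charpolyRev = 1 := Matrix.eval_charpolyRev
  have h1 := heval 1
  rw [one_smul] at h1
  rw [← h1, ← hr, Polynomial.eval_C]
  rw [← hr, Polynomial.eval_C] at h0
  exact h0

lemma det_one_add_of_sq_eq_zero {n : ℕ} (N : Matrix (Fin n) (Fin n) ℂ)
    (h : N * N = 0) : (1 + N).det = 1 := by
  have := det_one_sub_of_sq_eq_zero (-N) (by simpa using h)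
  simpa using this

/-- If `M` is a square complex matrix with `M * M = 0` and `S = M + Mᴴ`, then for
every complex number `z`, `det (I + z • S) = det (I - z • S)`. -/
theorem det_one_add_smul_eq_det_one_sub_smul {n : ℕ}
    (M : Matrix (Fin n) (Fin n) ℂ) (hM : M * M = 0) (z : ℂ) :
    (1 + z • (M + Mᴴ)).det = (1 - z • (M + Mᴴ)).det := by
  have hMH : Mᴴ * Mᴴ = 0 := by
    have := congrArg Matrix.conjTranspose hM
    simpa [Matrix.conjTranspose_mul] using this
  have hA : (z • M) * (z • M) = 0 := by
    rw [Matrix.smul_mul, Matrix.mul_smul, hM]; simp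
  have hB : (z • Mᴴ) * (z • Mᴴ) = 0 := by
    rw [Matrix.smul_mul, Matrix.mul_smul, hMH]; simp
  have h1 : M * Mᴴ * Mᴴ = 0 := by rw [mul_assoc, hMH, mul_zero]
  have h2 : Mᴴ * M * M = 0 := by rw [mul_assoc, hM, mul_zero]
  have key1 : (1 - z • M) * (1 + z • (M + Mᴴ)) * (1 - z • Mᴴ)
      = 1 - (z ^ 2) • (M * Mᴴ) := by
    simp only [smul_add, mul_add, add_mul, mul_sub, sub_mul, mul_one, one_mul,
      Matrix.smul_mul, Matrix.mul_smul, hM, hMH, h1, h2, smul_smul, smul_zero, Matrix.zero_mul, Matrix.mul_zero]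
    module
  have key2 : (1 + z • M) * (1 - z • (M + Mᴴ)) * (1 + z • Mᴴ)
      = 1 - (z ^ 2) • (M * Mᴴ) := by
    simp only [smul_add, mul_add, add_mul, mul_sub, sub_mul, mul_one, one_mul,
      Matrix.smul_mul, Matrix.mul_smul, hM, hMH, h1, h2, smul_smul, smul_zero, Matrix.zero_mul, Matrix.mul_zero]
    module
  have d1 := congrArg Matrix.det key1
  have d2 := congrArg Matrix.det key2
  rw [Matrix.det_mul, Matrix.det_mul, det_one_sub_of_sq_eq_zero _ hA,
    det_one_sub_of_sq_eq_zero _ hB, one_mul, mul_one] at d1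
  rw [Matrix.det_mul, Matrix.det_mul, det_one_add_of_sq_eq_zero _ hA,
    det_one_add_of_sq_eq_zero _ hB, one_mul, mul_one] at d2
  rw [d1, d2]
end

section
/- Let M be a square complex matrix with M² = 0, set S = M + Mᴴ and Q = M·Mᴴ + Mᴴ·M (so that S² = Q). Then for every complex number z, det(I + z·S)² = det(I − z²·Q). (This is the identity tr log(1 + λ(ℍ + ℍ*)) = ½ tr log(1 − λ²Q) obtained after integrating out the colors 1 and 2 in the bosonic colored group field theory.) -/
open scoped Matrix
open Polynomial

/-
With `A = z • M` and `B = z • Mᴴ`, both square-zero, one has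
`(1 - B) (1 + A + B) (1 - A) = 1 - B A`, and `1 - A`, `1 - B` are unipotent, so
`det (1 + (A + B)) = det (1 - B A)`. The right side is unchanged by `A, B ↦ -A, -B`, hence
`det (1 + z S) = det (1 - z S)`, and multiplying gives `det (1 - z² S²)` with `S² = Q`.
-/

namespace Matrix

variable {n R : Type*} [Fintype n] [DecidableEq n] [CommRing R]

theorem det_one_sub_of_isNilpotent [IsReduced R] {N : Matrix n n R} (hN : IsNilpotent N) :
    (1 - N).det = 1 := by
  have hcharpoly : N.charpoly = X ^ Fintype.card n := by
    have hnil := Polynomial.isNilpotent_iff.mp (isNilpotent_charpoly_sub_pow_of_isNilpotent hN)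
    exact sub_eq_zero.mp (Polynomial.ext fun i => (hnil i).eq_zero)
  simpa [hcharpoly] using (eval_charpoly N 1).symm

theorem det_one_add_add_eq_det_one_sub_mul [IsReduced R] {A B : Matrix n n R}
    (hA : A * A = 0) (hB : B * B = 0) : (1 + (A + B)).det = (1 - B * A).det := by
  have hfactor : (1 - B) * (1 + (A + B)) * (1 - A) = 1 - B * A := by
    calc (1 - B) * (1 + (A + B)) * (1 - A)
        = 1 - B * A - A * A - B * B + B * B * A + B * (A * A) := by noncomm_ring
      _ = 1 - B * A := by rw [hA, hB]; noncomm_ring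
  have hdetA : (1 - A).det = 1 := det_one_sub_of_isNilpotent ⟨2, by rw [sq, hA]⟩
  have hdetB : (1 - B).det = 1 := det_one_sub_of_isNilpotent ⟨2, by rw [sq, hB]⟩
  simpa [det_mul, hdetA, hdetB] using congrArg det hfactor

theorem det_one_add_add_sq_eq_det_one_sub_mul_add_mul [IsReduced R] {A B : Matrix n n R}
    (hA : A * A = 0) (hB : B * B = 0) :
    (1 + (A + B)).det ^ 2 = (1 - (A * B + B * A)).det := by
  have hneg : (1 - (A + B)).det = (1 + (A + B)).det := by
    rw [sub_eq_add_neg, neg_add, det_one_add_add_eq_det_one_sub_mul (by rwa [neg_mul_neg])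
      (by rwa [neg_mul_neg]), neg_mul_neg, det_one_add_add_eq_det_one_sub_mul hA hB]
  have hsq : (1 + (A + B)) * (1 - (A + B)) = 1 - (A * B + B * A) := by
    calc (1 + (A + B)) * (1 - (A + B)) = 1 - (A * B + B * A) - A * A - B * B := by noncomm_ring
      _ = 1 - (A * B + B * A) := by rw [hA, hB]; noncomm_ring
  rw [sq, ← hsq, det_mul, hneg]

end Matrix

/-- If `M` is a square complex matrix with `M * M = 0`, `S = M + Mᴴ` and
`Q = M * Mᴴ + Mᴴ * M` (so that `S ^ 2 = Q`), then for every complex number `z`,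
`det (I + z • S) ^ 2 = det (I - z ^ 2 • Q)`. -/
theorem det_one_add_smul_sq_eq_det_one_sub_sq_smul {n : ℕ}
    (M : Matrix (Fin n) (Fin n) ℂ) (hM : M * M = 0) (z : ℂ) :
    (1 + z • (M + Mᴴ)).det ^ 2 = (1 - z ^ 2 • (M * Mᴴ + Mᴴ * M)).det := by
  have hMH : Mᴴ * Mᴴ = 0 := by rw [← Matrix.conjTranspose_mul, hM, Matrix.conjTranspose_zero]
  have hA : z • M * (z • M) = 0 := by simp [hM]
  have hB : z • Mᴴ * (z • Mᴴ) = 0 := by simp [hMH]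
  have hQ : z ^ 2 • (M * Mᴴ + Mᴴ * M) = z • M * (z • Mᴴ) + z • Mᴴ * (z • M) := by
    simp only [Matrix.smul_mul, Matrix.mul_smul, smul_smul, smul_add, sq]
  rw [hQ, smul_add]
  exact Matrix.det_one_add_add_sq_eq_det_one_sub_mul_add_mul hA hB
end
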